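/- arXiv:2505.18276 — 4 statements merged into one kernel-verified Lean document; each statement's English description precedes it below -/
import Mathlib

section
/- Let μ > 0, a ≥ 0, σ > 0, and ε^a ∈ ℝ. Suppose ε^a(τ) = ε^a τ + O(τ²) as τ → 0⁺, and define for λ > 0: κ(λ, τ) = λ[e^{-τ}μ + (1-e^{-τ})λ]⁻¹ + λσ⁻²a² + ε^a(τ). Set λ⁽⁰⁾ = (μ⁻¹ + σ⁻²a²)⁻¹ and λ⁽¹⁾ = (λ⁽⁰⁾)³μ⁻² - (λ⁽⁰⁾)²μ⁻¹ - ε^a λ⁽⁰⁾. Then with λ(τ) = λ⁽⁰⁾ + λ⁽¹⁾τ, one has κ(λ(τ), τ) = 1 + O(τ²) as τ → 0⁺. -/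
open Real Filter Topology Asymptotics

theorem stmt11 (μ a σ ε : ℝ) (hμ : 0 < μ) (ha : 0 ≤ a) (hσ : 0 < σ)
    (εa : ℝ → ℝ)
    (hεa : (fun τ => εa τ - ε * τ) =O[𝓝[>] (0 : ℝ)] fun τ => τ ^ 2)
    (κ : ℝ → ℝ → ℝ)
    (hκ : ∀ l τ, κ l τ = l * (Real.exp (-τ) * μ + (1 - Real.exp (-τ)) * l)⁻¹
      + l * (σ ^ 2)⁻¹ * a ^ 2 + εa τ)
    (l0 l1 : ℝ)
    (hl0 : l0 = (μ⁻¹ + (σ ^ 2)⁻¹ * a ^ 2)⁻¹)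
    (hl1 : l1 = l0 ^ 3 * (μ ^ 2)⁻¹ - l0 ^ 2 * μ⁻¹ - ε * l0) :
    (fun τ => κ (l0 + l1 * τ) τ - 1) =O[𝓝[>] (0 : ℝ)] fun τ => τ ^ 2 := by
  have hμne : μ ≠ 0 := hμ.ne'
  have hl0pos : 0 < l0 := by rw [hl0]; positivity
  have hl0ne : l0 ≠ 0 := hl0pos.ne'
  have hcval : (σ ^ 2)⁻¹ * a ^ 2 = l0⁻¹ - μ⁻¹ := by
    have h : l0⁻¹ = μ⁻¹ + (σ ^ 2)⁻¹ * a ^ 2 := by rw [hl0, inv_inv]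
    linarith
  set β : ℝ := l1 * (μ - l0) + ε * l0 * μ with hβdef
  set P : ℝ → ℝ := fun τ => (-(l0 ^ 2 * l1) - β * (μ - l0) + τ * (β * l1)) / (l0 * μ)
    with hPdef
  set Q : ℝ → ℝ := fun τ =>
    ((l0 + l1 * τ) * (l0⁻¹ - μ⁻¹) + ε * τ - 1) * (μ - (l0 + l1 * τ)) with hQdef
  set D : ℝ → ℝ := fun τ => Real.exp (-τ) * μ + (1 - Real.exp (-τ)) * (l0 + l1 * τ)
    with hDdef
  -- g is O(τ²)
  have hg : (fun τ => Real.exp (-τ) - 1 + τ) =O[𝓝[>] (0 : ℝ)] fun τ => τ ^ 2 := by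
    rw [isBigO_iff]
    refine ⟨1, ?_⟩
    filter_upwards [Ioo_mem_nhdsGT_of_mem (by norm_num : (0:ℝ) ∈ Set.Ico (0:ℝ) 1)]
      with τ hτ
    have h1 : |(-τ)| ≤ 1 := by rw [abs_neg, abs_of_pos hτ.1]; exact hτ.2.le
    have h2 := Real.abs_exp_sub_one_sub_id_le h1
    have h3 : Real.exp (-τ) - 1 - (-τ) = Real.exp (-τ) - 1 + τ := by ring
    rw [h3, neg_pow] at h2
    simp only [Real.norm_eq_abs, one_mul]
    calc |Real.exp (-τ) - 1 + τ| ≤ (-1)^2 * τ ^ 2 := h2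
      _ ≤ |τ ^ 2| := by rw [abs_of_nonneg (sq_nonneg τ)]; norm_num
  -- tendsto facts
  have hDc : Continuous D := by
    simp only [hDdef]; fun_prop
  have hDt : Tendsto D (𝓝[>] (0:ℝ)) (𝓝 μ) := by
    have h0 : D 0 = μ := by simp [hDdef]
    simpa [h0] using (hDc.tendsto 0).mono_left nhdsWithin_le_nhds
  have hDne : ∀ᶠ τ in 𝓝[>] (0:ℝ), D τ ≠ 0 := hDt.eventually (eventually_ne_nhds hμne)
  have hDinvO : (fun τ => (D τ)⁻¹) =O[𝓝[>] (0:ℝ)] (fun _ => (1:ℝ)) :=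
    (hDt.inv₀ hμne).isBigO_one ℝ
  have hPO : P =O[𝓝[>] (0:ℝ)] (fun _ => (1:ℝ)) := by
    have hc : Continuous P := by simp only [hPdef]; fun_prop
    exact ((hc.tendsto 0).mono_left nhdsWithin_le_nhds).isBigO_one ℝ
  have hQO : Q =O[𝓝[>] (0:ℝ)] (fun _ => (1:ℝ)) := by
    have hc : Continuous Q := by simp only [hQdef]; fun_prop
    exact ((hc.tendsto 0).mono_left nhdsWithin_le_nhds).isBigO_one ℝ
  -- the O(τ²) bound for the main term
  have hNO : (fun τ => (τ ^ 2 * P τ + (Real.exp (-τ) - 1 + τ) * Q τ) * (D τ)⁻¹)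
      =O[𝓝[>] (0:ℝ)] fun τ => τ ^ 2 := by
    have h1 : (fun τ => τ ^ 2 * P τ) =O[𝓝[>] (0:ℝ)] fun τ => τ ^ 2 := by
      have := (isBigO_refl (fun τ : ℝ => τ ^ 2) (𝓝[>] (0:ℝ))).mul hPO
      simpa using this
    have h2 : (fun τ => (Real.exp (-τ) - 1 + τ) * Q τ) =O[𝓝[>] (0:ℝ)]
        fun τ => τ ^ 2 := by
      have := hg.mul hQO
      simpa using this
    have := (h1.add h2).mul hDinvO
    simpa using this
  -- eventual identity
  have hfin : ∀ᶠ τ in 𝓝[>] (0:ℝ), κ (l0 + l1 * τ) τ - 1 =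
      (εa τ - ε * τ) + (τ ^ 2 * P τ + (Real.exp (-τ) - 1 + τ) * Q τ) * (D τ)⁻¹ := by
    filter_upwards [hDne] with τ hD0
    have ha2 : a ^ 2 = σ ^ 2 * (l0⁻¹ - μ⁻¹) := by
      rw [← hcval]; field_simp
    have keyτ : (l0 + l1 * τ) +
        ((l0 + l1 * τ) * (l0⁻¹ - μ⁻¹) + ε * τ - 1) *
          (Real.exp (-τ) * μ + (1 - Real.exp (-τ)) * (l0 + l1 * τ)) =
        τ ^ 2 * P τ + (Real.exp (-τ) - 1 + τ) * Q τ := by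
      simp only [hPdef, hQdef, hβdef]
      rw [hl1]
      field_simp
      ring
    rw [hκ, ha2, ← keyτ]
    simp only [hDdef] at hD0 ⊢
    have hσ2 : σ ^ 2 ≠ 0 := by positivity
    generalize Real.exp (-τ) * μ + (1 - Real.exp (-τ)) * (l0 + l1 * τ) = X at hD0 ⊢
    field_simp
    ring
  have hfin' : (fun τ => κ (l0 + l1 * τ) τ - 1) =ᶠ[𝓝[>] (0:ℝ)]
      (fun τ => (εa τ - ε * τ) + (τ ^ 2 * P τ + (Real.exp (-τ) - 1 + τ) * Q τ) * (D τ)⁻¹) :=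
    hfin
  exact (hεa.add hNO).congr' hfin'.symm EventuallyEq.rfl
end

section
/- Let μ > 0 and ε^a ∈ ℝ, with ε^a(τ) = ε^a τ + O(τ²). Define κ(λ, τ) = λ[e^{-τ}μ + (1-e^{-τ})λ]⁻¹ + ε^a(τ). Then with λ(τ) = μ - με^a τ, one has κ(λ(τ), τ) = 1 + O(τ²) as τ → 0⁺. -/
open Real Filter Topology Asymptotics

theorem stmt12 (μ ε : ℝ) (hμ : 0 < μ)
    (εa : ℝ → ℝ)
    (hεa : (fun τ => εa τ - ε * τ) =O[𝓝[>] (0 : ℝ)] fun τ => τ ^ 2)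
    (κ : ℝ → ℝ → ℝ)
    (hκ : ∀ l τ, κ l τ = l * (Real.exp (-τ) * μ + (1 - Real.exp (-τ)) * l)⁻¹ + εa τ) :
    (fun τ => κ (μ - μ * ε * τ) τ - 1) =O[𝓝[>] (0 : ℝ)] fun τ => τ ^ 2 := by
  set c : ℝ := min 1 (1 / (2 * (|ε| + 1))) with hc
  have hcpos : 0 < c := by
    apply lt_min one_pos
    positivity
  have hmem : Set.Ioo (0:ℝ) c ∈ 𝓝[>] (0:ℝ) :=
    Ioo_mem_nhdsGT_of_mem ⟨le_refl 0, hcpos⟩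
  -- basic facts for τ ∈ (0, c)
  have hfacts : ∀ τ ∈ Set.Ioo (0:ℝ) c,
      let l := μ - μ * ε * τ
      let D := Real.exp (-τ) * μ + (1 - Real.exp (-τ)) * l
      μ / 2 ≤ D ∧ |l| ≤ 3 / 2 * μ ∧ 0 ≤ 1 - Real.exp (-τ) ∧ 1 - Real.exp (-τ) ≤ τ := by
    intro τ hτ
    obtain ⟨hτ0, hτc⟩ := hτ
    have hτ1 : τ ≤ 1 := le_of_lt (lt_of_lt_of_le hτc (min_le_left _ _))
    have hτε : |ε| * τ ≤ 1 / 2 := by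
      have hτ2 : τ ≤ 1 / (2 * (|ε| + 1)) := le_of_lt (lt_of_lt_of_le hτc (min_le_right _ _))
      have h1 : |ε| * τ ≤ (|ε| + 1) * (1 / (2 * (|ε| + 1))) := by
        apply mul_le_mul (by linarith [abs_nonneg ε]) hτ2 (le_of_lt hτ0) (by positivity)
      have h2 : (|ε| + 1) * (1 / (2 * (|ε| + 1))) = 1 / 2 := by
        field_simp
      linarith
    have hμετ : |μ * ε * τ| ≤ μ / 2 := by
      rw [abs_mul, abs_mul, abs_of_pos hμ, abs_of_pos hτ0]
      calc μ * |ε| * τ = μ * (|ε| * τ) := by ring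
        _ ≤ μ * (1 / 2) := by nlinarith
        _ = μ / 2 := by ring
    have hlb : μ / 2 ≤ μ - μ * ε * τ := by
      have := abs_le.mp hμετ
      linarith [this.2]
    have hub : μ - μ * ε * τ ≤ 3 / 2 * μ := by
      have := abs_le.mp hμετ
      linarith [this.1]
    have hexp1 : Real.exp (-τ) ≤ 1 := Real.exp_le_one_iff.mpr (by linarith)
    have hexp0 : 0 < Real.exp (-τ) := Real.exp_pos _
    have hexplb : 1 - τ ≤ Real.exp (-τ) := by
      have := Real.add_one_le_exp (-τ); linarith
    refine ⟨?_, ?_, by linarith, by linarith⟩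
    · -- D is a convex combination of μ and l, both ≥ μ/2
      have h1 : Real.exp (-τ) * μ ≥ Real.exp (-τ) * (μ / 2) := by nlinarith
      have h2 : (1 - Real.exp (-τ)) * (μ - μ * ε * τ) ≥ (1 - Real.exp (-τ)) * (μ / 2) := by
        nlinarith
      have h3 : Real.exp (-τ) * (μ / 2) + (1 - Real.exp (-τ)) * (μ / 2) = μ / 2 := by ring
      linarith
    · rw [abs_le]; constructor <;> linarith
  -- rewrite κ - 1 as two pieces
  have hEq : ∀ τ ∈ Set.Ioo (0:ℝ) c,
      κ (μ - μ * ε * τ) τ - 1 =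
      (εa τ - ε * τ) +
        ε * τ * (1 - Real.exp (-τ)) * (μ - μ * ε * τ) *
          (Real.exp (-τ) * μ + (1 - Real.exp (-τ)) * (μ - μ * ε * τ))⁻¹ := by
    intro τ hτ
    have hD := (hfacts τ hτ).1
    have hDpos : 0 < Real.exp (-τ) * μ + (1 - Real.exp (-τ)) * (μ - μ * ε * τ) := by
      have : 0 < μ / 2 := by linarith
      linarith
    rw [hκ]
    have h1 : (Real.exp (-τ) * μ + (1 - Real.exp (-τ)) * (μ - μ * ε * τ)) *
        (Real.exp (-τ) * μ + (1 - Real.exp (-τ)) * (μ - μ * ε * τ))⁻¹ = 1 :=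
      mul_inv_cancel₀ hDpos.ne'
    linear_combination (1 - ε * τ) * h1
  -- the second piece is O(τ^2)
  have h2 : (fun τ => ε * τ * (1 - Real.exp (-τ)) * (μ - μ * ε * τ) *
      (Real.exp (-τ) * μ + (1 - Real.exp (-τ)) * (μ - μ * ε * τ))⁻¹)
      =O[𝓝[>] (0:ℝ)] fun τ => τ ^ 2 := by
    rw [isBigO_iff]
    refine ⟨|ε| * (3 / 2 * μ) * (μ / 2)⁻¹, ?_⟩
    filter_upwards [hmem] with τ hτ
    obtain ⟨hD, hl, hexpnn, hexpτ⟩ := hfacts τ hτ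
    have hτ0 : 0 < τ := hτ.1
    have hDpos : 0 < Real.exp (-τ) * μ + (1 - Real.exp (-τ)) * (μ - μ * ε * τ) := by
      have : 0 < μ / 2 := by linarith
      linarith
    simp only [Real.norm_eq_abs]
    rw [abs_mul, abs_mul, abs_mul, abs_mul, abs_of_pos hτ0,
      abs_of_nonneg hexpnn, abs_inv, abs_of_pos hDpos]
    have h1 : |ε| * τ * (1 - Real.exp (-τ)) * |μ - μ * ε * τ| ≤
        |ε| * τ * τ * (3 / 2 * μ) := by
      have hε0 : (0:ℝ) ≤ |ε| := abs_nonneg ε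
      have ha : |ε| * τ * (1 - Real.exp (-τ)) ≤ |ε| * τ * τ :=
        mul_le_mul_of_nonneg_left hexpτ (by positivity)
      exact mul_le_mul ha hl (abs_nonneg _) (by positivity)
    have hinv : (Real.exp (-τ) * μ + (1 - Real.exp (-τ)) * (μ - μ * ε * τ))⁻¹ ≤ (μ / 2)⁻¹ := by
      apply inv_anti₀ (by linarith) hD
    have habs : |τ ^ 2| = τ ^ 2 := abs_of_nonneg (by positivity)
    rw [habs]
    calc |ε| * τ * (1 - Real.exp (-τ)) * |μ - μ * ε * τ| *
          (Real.exp (-τ) * μ + (1 - Real.exp (-τ)) * (μ - μ * ε * τ))⁻¹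
        ≤ |ε| * τ * τ * (3 / 2 * μ) * (μ / 2)⁻¹ := by
          apply mul_le_mul h1 hinv (by positivity) (by positivity)
      _ = |ε| * (3 / 2 * μ) * (μ / 2)⁻¹ * τ ^ 2 := by ring
  -- combine
  have hsum := hεa.add h2
  refine hsum.congr' ?_ (EventuallyEq.refl _ _)
  filter_upwards [hmem] with τ hτ
  exact (hEq τ hτ).symm
end

section
/- Let μ > 0, λ > 0, τ > 0, and let φ: ℝ → ℝ be measurable with ∫ exp(-φ(z)) N(0,μ)(z) dz < ∞. Let (X₀, X_τ) be jointly Gaussian with mean zero and covariance [[μ, e^{-τ/2}μ],[e^{-τ/2}μ, e^{-τ}μ + (1-e^{-τ})λ]], and define μ_τ as the law of e^{-τ/2}Z₀ + √(1-e^{-τ}) ξ where Z₀ has density ∝ exp(-φ) w.r.t. N(0,μ) and ξ ~ N(0,λ) is independent. Then μ_τ is absolutely continuous with respect to N(0, e^{-τ}μ + (1-e^{-τ})λ) with density at x proportional to E[exp(-φ(X₀)) | X_τ = x]. -/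
open Real MeasureTheory ProbabilityTheory

open scoped NNReal ENNReal

/-- Density of the one-dimensional Gaussian `N(m, v)`. -/
noncomputable def gpdf (m v x : ℝ) : ℝ :=
  (Real.sqrt (2 * Real.pi * v))⁻¹ * Real.exp (-(x - m) ^ 2 / (2 * v))

lemma gpdf_nonneg (m v x : ℝ) : 0 ≤ gpdf m v x := by
  unfold gpdf; positivity

lemma gpdf_measurable (m v : ℝ) : Measurable (gpdf m v) :=
  ((((measurable_id.sub_const m).pow_const 2).neg.div_const _).exp).const_mul _

lemma gaussianPDFReal_eq (m : ℝ) (v : ℝ≥0) :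
    gaussianPDFReal m v = gpdf m (v : ℝ) := rfl

lemma gauss_factor (a μ lam v x z : ℝ) (hμ : 0 < μ) (hlam : 0 < lam)
    (hA : 0 < a) (hA1 : a^2 < 1) (hv : v = a^2*μ + (1-a^2)*lam) :
    gpdf 0 μ z * gpdf (a*z) ((1-a^2)*lam) x
      = gpdf 0 v x * gpdf (a*μ*x/v) (μ - a^2*μ^2/v) z := by
  have hv0 : 0 < v := by nlinarith
  have hvτ : μ - a^2*μ^2/v = μ*(1-a^2)*lam / v := by
    field_simp
    nlinarith [hv]
  unfold gpdf
  rw [hvτ]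
  have h1 : 0 < 1 - a^2 := by nlinarith
  have hpre : (Real.sqrt (2*Real.pi*μ))⁻¹ * (Real.sqrt (2*Real.pi*((1-a^2)*lam)))⁻¹
      = (Real.sqrt (2*Real.pi*v))⁻¹ * (Real.sqrt (2*Real.pi*(μ*(1-a^2)*lam/v)))⁻¹ := by
    rw [← mul_inv, ← mul_inv, ← Real.sqrt_mul (by positivity), ← Real.sqrt_mul (by positivity)]
    congr 1
    field_simp
  have hexp : Real.exp (-(z-0)^2/(2*μ)) * Real.exp (-(x - a*z)^2 / (2*((1-a^2)*lam)))
      = Real.exp (-(x-0)^2/(2*v)) * Real.exp (-(z - a*μ*x/v)^2 / (2*(μ*(1-a^2)*lam/v))) := by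
    rw [← Real.exp_add, ← Real.exp_add]
    congr 1
    have hμ' : μ ≠ 0 := hμ.ne'
    have hl' : lam ≠ 0 := hlam.ne'
    have h1' : (1:ℝ) - a^2 ≠ 0 := h1.ne'
    have hv' : v ≠ 0 := hv0.ne'
    subst hv
    field_simp
    ring
  calc (Real.sqrt (2*Real.pi*μ))⁻¹ * Real.exp (-(z-0)^2/(2*μ)) *
        ((Real.sqrt (2*Real.pi*((1-a^2)*lam)))⁻¹ * Real.exp (-(x - a*z)^2 / (2*((1-a^2)*lam))))
      = ((Real.sqrt (2*Real.pi*μ))⁻¹ * (Real.sqrt (2*Real.pi*((1-a^2)*lam)))⁻¹) *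
        (Real.exp (-(z-0)^2/(2*μ)) * Real.exp (-(x - a*z)^2 / (2*((1-a^2)*lam)))) := by ring
    _ = ((Real.sqrt (2*Real.pi*v))⁻¹ * (Real.sqrt (2*Real.pi*(μ*(1-a^2)*lam/v)))⁻¹) *
        (Real.exp (-(x-0)^2/(2*v)) * Real.exp (-(z - a*μ*x/v)^2 / (2*(μ*(1-a^2)*lam/v)))) := by
        rw [hpre, hexp]
    _ = _ := by ring

lemma integrable_exp_gpdf {φ : ℝ → ℝ} (hφ : Measurable φ) {μ m w : ℝ}
    (hw : 0 < w) (hwμ : w < μ)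
    (hI : Integrable (fun z => Real.exp (-φ z) * gpdf 0 μ z)) :
    Integrable (fun z => Real.exp (-φ z) * gpdf m w z) := by
  have hμ : 0 < μ := hw.trans hwμ
  set α : ℝ := 1/(2*w) - 1/(2*μ) with hα
  have hα0 : 0 < α := by
    rw [hα]; rw [sub_pos]
    apply one_div_lt_one_div_of_lt <;> linarith
  set β : ℝ := m / w with hβ
  set C : ℝ := Real.sqrt (2*Real.pi*μ) / Real.sqrt (2*Real.pi*w) *
      Real.exp (β^2/(4*α) - m^2/(2*w)) with hC
  have hbound : ∀ z, gpdf m w z ≤ C * gpdf 0 μ z := by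
    intro z
    unfold gpdf
    rw [hC]
    have hs : (0:ℝ) < Real.sqrt (2*Real.pi*w) := Real.sqrt_pos.mpr (by positivity)
    have hsμ : (0:ℝ) < Real.sqrt (2*Real.pi*μ) := Real.sqrt_pos.mpr (by positivity)
    have key : -(z - m)^2/(2*w) ≤ β^2/(4*α) - m^2/(2*w) + (-(z-0)^2/(2*μ)) := by
      have h2 : -(z-m)^2/(2*w) - (-(z-0)^2/(2*μ)) = -α*z^2 + β*z - m^2/(2*w) := by
        rw [hα, hβ]; field_simp; ring
      have h3 : -α*z^2 + β*z ≤ β^2/(4*α) := by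
        rw [← sub_nonneg]
        have h4 : β^2/(4*α) - (-α*z^2 + β*z) = (2*α*z - β)^2 / (4*α) := by
          field_simp; ring
        rw [h4]; positivity
      linarith [h2, h3]
    calc (Real.sqrt (2*Real.pi*w))⁻¹ * Real.exp (-(z-m)^2/(2*w))
        ≤ (Real.sqrt (2*Real.pi*w))⁻¹ *
          (Real.exp (β^2/(4*α) - m^2/(2*w)) * Real.exp (-(z-0)^2/(2*μ))) := by
          rw [← Real.exp_add]
          exact mul_le_mul_of_nonneg_left (Real.exp_le_exp.mpr key) (by positivity)
      _ = Real.sqrt (2*Real.pi*μ) / Real.sqrt (2*Real.pi*w) * Real.exp (β^2/(4*α) - m^2/(2*w)) *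
          ((Real.sqrt (2*Real.pi*μ))⁻¹ * Real.exp (-(z-0)^2/(2*μ))) := by
          field_simp
  have hC0 : 0 ≤ C := by positivity
  refine Integrable.mono' (hI.const_mul C) ?_ ?_
  · exact ((hφ.neg.exp).mul (gpdf_measurable m w)).aestronglyMeasurable
  · filter_upwards with z
    have : (0:ℝ) ≤ Real.exp (-φ z) * gpdf m w z :=
      mul_nonneg (Real.exp_nonneg _) (gpdf_nonneg m w z)
    rw [Real.norm_eq_abs, abs_of_nonneg this]
    calc Real.exp (-φ z) * gpdf m w z ≤ Real.exp (-φ z) * (C * gpdf 0 μ z) :=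
          mul_le_mul_of_nonneg_left (hbound z) (Real.exp_nonneg _)
      _ = C * (Real.exp (-φ z) * gpdf 0 μ z) := by ring

/-- The pushforward of the non-Gaussian prior `dμ₀ ∝ exp(-φ) dN(0,μ)` through the
Ornstein–Uhlenbeck map `(z, ξ) ↦ e^{-τ/2} z + √(1-e^{-τ}) ξ` (with `ξ ~ N(0,λ)`) is
absolutely continuous w.r.t. `N(0, e^{-τ}μ + (1-e^{-τ})λ)` with density proportional to
`x ↦ E[exp(-φ(X₀)) | X_τ = x]`, the latter conditional expectation being the integral of
`exp(-φ)` against the conditional Gaussian `N(m_τ(x), v_τ)`. -/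
theorem stmt15 (μ lam τ : ℝ) (hμ : 0 < μ) (hlam : 0 < lam) (hτ : 0 < τ)
    (φ : ℝ → ℝ) (hφ : Measurable φ)
    (hint : Integrable (fun z => Real.exp (-φ z)) (gaussianReal 0 μ.toNNReal))
    (cnorm : ℝ)
    (hc : cnorm = ∫ z, Real.exp (-φ z) ∂(gaussianReal 0 μ.toNNReal))
    (μ0 μτ : Measure ℝ)
    (hμ0 : μ0 = (gaussianReal 0 μ.toNNReal).withDensity
      (fun z => ENNReal.ofReal (Real.exp (-φ z) / cnorm)))
    (hμτ : μτ = Measure.map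
      (fun w : ℝ × ℝ => Real.exp (-τ / 2) * w.1 + Real.sqrt (1 - Real.exp (-τ)) * w.2)
      (μ0.prod (gaussianReal 0 lam.toNNReal)))
    (g : ℝ → ℝ)
    (hg : ∀ x, g x = ∫ z, Real.exp (-φ z) *
      gpdf (Real.exp (-τ / 2) * μ * x / (Real.exp (-τ) * μ + (1 - Real.exp (-τ)) * lam))
        (μ - Real.exp (-τ) * μ ^ 2 / (Real.exp (-τ) * μ + (1 - Real.exp (-τ)) * lam)) z) :
    ∃ k : ℝ, 0 < k ∧
      μτ = (gaussianReal 0 (Real.exp (-τ) * μ + (1 - Real.exp (-τ)) * lam).toNNReal).withDensity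
        (fun x => ENNReal.ofReal (k * g x)) := by
  have hA0 : 0 < Real.exp (-τ) := Real.exp_pos _
  have hA1 : Real.exp (-τ) < 1 := Real.exp_lt_one_iff.mpr (by linarith)
  set a : ℝ := Real.exp (-τ / 2) with ha_def
  have ha0 : 0 < a := Real.exp_pos _
  have ha2 : a ^ 2 = Real.exp (-τ) := by
    rw [ha_def, sq, ← Real.exp_add]; congr 1; ring
  set b : ℝ := Real.sqrt (1 - Real.exp (-τ)) with hb_def
  have hb2 : b ^ 2 = 1 - Real.exp (-τ) := Real.sq_sqrt (by linarith)
  have hb0 : 0 < b := Real.sqrt_pos.mpr (by linarith)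
  set v : ℝ := Real.exp (-τ) * μ + (1 - Real.exp (-τ)) * lam with hv_def
  have hv0 : 0 < v := by rw [hv_def]; nlinarith
  set wv : ℝ := (1 - Real.exp (-τ)) * lam with hwv_def
  have hwv0 : 0 < wv := by rw [hwv_def]; nlinarith
  set vτ : ℝ := μ - Real.exp (-τ) * μ ^ 2 / v with hvτ_def
  have hvτ_alt : vτ = μ * (1 - Real.exp (-τ)) * lam / v := by
    rw [hvτ_def]
    field_simp [hv0.ne']
    rw [hv_def]; ring
  have hvτ0 : 0 < vτ := by
    rw [hvτ_alt]
    exact div_pos (mul_pos (mul_pos hμ (by linarith)) hlam) hv0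
  have hvτμ : vτ < μ := by
    rw [hvτ_def]
    have : 0 < Real.exp (-τ) * μ ^ 2 / v := by positivity
    linarith
  -- NNReal facts
  have hμ' : ((μ.toNNReal : ℝ≥0) : ℝ) = μ := Real.coe_toNNReal _ hμ.le
  have hμ'0 : μ.toNNReal ≠ 0 := by simp [Real.toNNReal_eq_zero, not_le, hμ]
  have hlam' : ((lam.toNNReal : ℝ≥0) : ℝ) = lam := Real.coe_toNNReal _ hlam.le
  have hlam'0 : lam.toNNReal ≠ 0 := by simp [Real.toNNReal_eq_zero, not_le, hlam]
  have hv' : ((v.toNNReal : ℝ≥0) : ℝ) = v := Real.coe_toNNReal _ hv0.le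
  have hv'0 : v.toNNReal ≠ 0 := by simp [Real.toNNReal_eq_zero, not_le, hv0]
  set W : ℝ≥0 := ⟨b ^ 2, sq_nonneg b⟩ * lam.toNNReal with hW_def
  have hW : ((W : ℝ≥0) : ℝ) = wv := by
    rw [hW_def]; show b ^ 2 * (lam.toNNReal : ℝ) = wv; rw [hb2, hlam', hwv_def]
  have hW0 : W ≠ 0 := by
    intro h
    have : ((W : ℝ≥0) : ℝ) = 0 := by rw [h]; simp
    rw [hW] at this; exact hwv0.ne' this
  -- base integrability
  have hint' := hint
  rw [gaussianReal_of_var_ne_zero 0 hμ'0,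
    integrable_withDensity_iff (measurable_gaussianPDF 0 μ.toNNReal)
      (ae_of_all _ fun x => ENNReal.ofReal_lt_top)] at hint'
  have hI : Integrable (fun z => Real.exp (-φ z) * gpdf 0 μ z) := by
    have heq : (fun z => Real.exp (-φ z) * gpdf 0 μ z)
        = fun z => Real.exp (-φ z) * (gaussianPDF 0 μ.toNNReal z).toReal := by
      funext z
      rw [gaussianPDF, ENNReal.toReal_ofReal (gaussianPDFReal_nonneg _ _ _),
        gaussianPDFReal_eq, hμ']
    rw [heq]; exact hint'
  -- cnorm positive
  have hcpos : 0 < cnorm := by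
    rw [hc]
    rw [integral_pos_iff_support_of_nonneg_ae
      (ae_of_all _ fun z => Real.exp_nonneg (-φ z)) hint]
    have hsup : (Function.support fun z => Real.exp (-φ z)) = Set.univ :=
      Set.eq_univ_of_forall fun z => Real.exp_ne_zero _
    rw [hsup]
    simp
  -- per-x integrability and nonnegativity of g
  have hIx : ∀ x : ℝ, Integrable (fun z => Real.exp (-φ z) * gpdf (a * μ * x / v) vτ z) :=
    fun x => integrable_exp_gpdf hφ hvτ0 hvτμ hI
  have hofg : ∀ x : ℝ, (∫⁻ z, ENNReal.ofReal (Real.exp (-φ z) * gpdf (a * μ * x / v) vτ z))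
      = ENNReal.ofReal (g x) := by
    intro x
    rw [hg x, ofReal_integral_eq_lintegral_ofReal (hIx x)
      (ae_of_all _ fun z => mul_nonneg (Real.exp_nonneg _) (gpdf_nonneg _ _ _))]
  -- g measurable
  have hgm : Measurable g := by
    have hsm : StronglyMeasurable fun p : ℝ × ℝ =>
        Real.exp (-φ p.2) * gpdf (a * μ * p.1 / v) vτ p.2 := by
      apply Measurable.stronglyMeasurable
      refine ((hφ.comp measurable_snd).neg.exp).mul ?_
      unfold gpdf
      exact ((((measurable_snd.sub ((measurable_fst.const_mul (a * μ)).div_const v)).pow_const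
        2).neg.div_const _).exp).const_mul _
    have h2 := hsm.integral_prod_right' (ν := volume)
    have hfun : g = fun x => ∫ z, Real.exp (-φ z) * gpdf (a * μ * x / v) vτ z := funext hg
    rw [hfun]; exact h2.measurable
  refine ⟨cnorm⁻¹, inv_pos.mpr hcpos, ?_⟩
  rw [hμτ, hμ0]
  refine Measure.ext fun s hs => ?_
  have hT : Measurable fun p : ℝ × ℝ => a * p.1 + b * p.2 :=
    (measurable_fst.const_mul a).add (measurable_snd.const_mul b)
  rw [Measure.map_apply hT hs, Measure.prod_apply (hT hs)]
  -- section measure computation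
  have hsec : ∀ z : ℝ,
      gaussianReal 0 lam.toNNReal (Prod.mk z ⁻¹' ((fun p : ℝ × ℝ => a * p.1 + b * p.2) ⁻¹' s))
      = ∫⁻ x in s, ENNReal.ofReal (gpdf (a * z) wv x) := by
    intro z
    have hmb : Measurable fun ξ : ℝ => a * z + b * ξ := (measurable_id.const_mul b).const_add _
    have hpre : Prod.mk z ⁻¹' ((fun p : ℝ × ℝ => a * p.1 + b * p.2) ⁻¹' s)
        = (fun ξ => a * z + b * ξ) ⁻¹' s := rfl
    rw [hpre, ← Measure.map_apply hmb hs]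
    have hcomp : (fun ξ : ℝ => a * z + b * ξ) = (fun y => y + a * z) ∘ (fun ξ => b * ξ) := by
      funext ξ; simp only [Function.comp_apply]; ring
    have hmap : (gaussianReal 0 lam.toNNReal).map (fun ξ => a * z + b * ξ)
        = gaussianReal (a * z) W := by
      rw [hcomp, ← Measure.map_map (measurable_add_const (a * z)) (measurable_const_mul b)]
      have h1 : (gaussianReal 0 lam.toNNReal).map (fun ξ => b * ξ) = gaussianReal (b * 0) W :=
        gaussianReal_map_const_mul b
      rw [h1, mul_zero, gaussianReal_map_add_const (a * z), zero_add]
    rw [hmap, gaussianReal_apply _ hW0 s]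
    refine lintegral_congr fun x => ?_
    rw [gaussianPDF, gaussianPDFReal_eq, hW]
  rw [lintegral_congr hsec]
  have hf : Measurable fun z => ENNReal.ofReal (Real.exp (-φ z) / cnorm) :=
    ENNReal.measurable_ofReal.comp ((hφ.neg.exp).div_const cnorm)
  have hGm : Measurable fun z : ℝ => ∫⁻ x in s, ENNReal.ofReal (gpdf (a * z) wv x) := by
    have hm2 : Measurable fun p : ℝ × ℝ => ENNReal.ofReal (gpdf (a * p.1) wv p.2) := by
      apply ENNReal.measurable_ofReal.comp
      unfold gpdf
      exact ((((measurable_snd.sub (measurable_fst.const_mul a)).pow_const 2).neg.div_const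
        _).exp).const_mul _
    exact hm2.lintegral_prod_right'
  rw [lintegral_withDensity_eq_lintegral_mul _ hf hGm,
    gaussianReal_of_var_ne_zero 0 hμ'0]
  simp only [Pi.mul_apply]
  rw [lintegral_withDensity_eq_lintegral_mul _ (measurable_gaussianPDF 0 μ.toNNReal)
    (g := fun z => ENNReal.ofReal (Real.exp (-φ z) / cnorm) *
      ∫⁻ x in s, ENNReal.ofReal (gpdf (a * z) wv x)) (hf.mul hGm)]
  simp only [Pi.mul_apply]
  have key : ∀ z : ℝ, gaussianPDF 0 μ.toNNReal z *
      (ENNReal.ofReal (Real.exp (-φ z) / cnorm) *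
        ∫⁻ x in s, ENNReal.ofReal (gpdf (a * z) wv x))
      = ∫⁻ x in s, ENNReal.ofReal (gpdf 0 v x) * ENNReal.ofReal cnorm⁻¹ *
          ENNReal.ofReal (Real.exp (-φ z) * gpdf (a * μ * x / v) vτ z) := by
    intro z
    have hmx : Measurable fun x => ENNReal.ofReal (gpdf (a * z) wv x) :=
      ENNReal.measurable_ofReal.comp (gpdf_measurable _ _)
    rw [← lintegral_const_mul _ hmx, ← lintegral_const_mul _ (hmx.const_mul _)]
    refine lintegral_congr fun x => ?_
    have hfac := gauss_factor a μ lam v x z hμ hlam ha0 (by rw [ha2]; exact hA1)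
      (by rw [ha2, hv_def])
    rw [ha2] at hfac
    rw [← hwv_def, ← hvτ_def] at hfac
    have hreal : gpdf 0 μ z * (Real.exp (-φ z) / cnorm * gpdf (a * z) wv x)
        = gpdf 0 v x * cnorm⁻¹ * (Real.exp (-φ z) * gpdf (a * μ * x / v) vτ z) := by
      calc gpdf 0 μ z * (Real.exp (-φ z) / cnorm * gpdf (a * z) wv x)
          = gpdf 0 μ z * gpdf (a * z) wv x * (Real.exp (-φ z) / cnorm) := by ring
        _ = gpdf 0 v x * gpdf (a * μ * x / v) vτ z * (Real.exp (-φ z) / cnorm) := by rw [hfac]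
        _ = gpdf 0 v x * cnorm⁻¹ * (Real.exp (-φ z) * gpdf (a * μ * x / v) vτ z) := by ring
    rw [gaussianPDF, gaussianPDFReal_eq, hμ',
      ← ENNReal.ofReal_mul (div_nonneg (Real.exp_nonneg _) hcpos.le),
      ← ENNReal.ofReal_mul (gpdf_nonneg 0 μ z), hreal,
      ENNReal.ofReal_mul (mul_nonneg (gpdf_nonneg _ _ _) (inv_nonneg.mpr hcpos.le)),
      ENNReal.ofReal_mul (gpdf_nonneg _ _ _)]
  rw [lintegral_congr key]
  have hswapm : AEMeasurable (fun p : ℝ × ℝ => ENNReal.ofReal (gpdf 0 v p.2) *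
      ENNReal.ofReal cnorm⁻¹ *
      ENNReal.ofReal (Real.exp (-φ p.1) * gpdf (a * μ * p.2 / v) vτ p.1))
      (volume.prod (volume.restrict s)) := by
    apply Measurable.aemeasurable
    refine Measurable.fun_mul (Measurable.fun_mul ?_ measurable_const) ?_
    · exact ENNReal.measurable_ofReal.comp ((gpdf_measurable 0 v).comp measurable_snd)
    · apply ENNReal.measurable_ofReal.comp
      refine ((hφ.comp measurable_fst).neg.exp).mul ?_
      unfold gpdf
      exact ((((measurable_fst.sub ((measurable_snd.const_mul (a * μ)).div_const v)).pow_const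
        2).neg.div_const _).exp).const_mul _
  rw [lintegral_lintegral_swap hswapm]
  have hinner : ∀ x : ℝ, (∫⁻ z, ENNReal.ofReal (gpdf 0 v x) * ENNReal.ofReal cnorm⁻¹ *
      ENNReal.ofReal (Real.exp (-φ z) * gpdf (a * μ * x / v) vτ z))
      = ENNReal.ofReal (gpdf 0 v x) * ENNReal.ofReal (cnorm⁻¹ * g x) := by
    intro x
    have hmz : Measurable fun z => ENNReal.ofReal (Real.exp (-φ z) * gpdf (a * μ * x / v) vτ z) :=
      ENNReal.measurable_ofReal.comp ((hφ.neg.exp).mul (gpdf_measurable _ _))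
    rw [lintegral_const_mul _ hmz, hofg x, mul_assoc,
      ← ENNReal.ofReal_mul (inv_nonneg.mpr hcpos.le)]
  rw [lintegral_congr hinner]
  rw [withDensity_apply _ hs, gaussianReal_of_var_ne_zero 0 hv'0, restrict_withDensity hs,
    lintegral_withDensity_eq_lintegral_mul _ (measurable_gaussianPDF 0 v.toNNReal)
      ((hgm.const_mul cnorm⁻¹).ennreal_ofReal)]
  refine lintegral_congr fun x => ?_
  simp only [Pi.mul_apply]
  rw [gaussianPDF, gaussianPDFReal_eq, hv']
end

section
/- Let φ: ℝ → ℝ be twice continuously differentiable with bounded derivatives up to order 3, λ > 0, p ∈ ℝ, and x ∈ ℝ. Then, with G ~ N(0,1), E[ exp( -φ( √(λτ)(1 - τ/4) G + x(1 + (1/2 - p)τ) ) ) ] = exp(-φ(x)) · [ 1 + ( λ(φ'(x)² - φ''(x)) - φ'(x)(1 - 2p)x ) τ/2 + O(τ^{3/2}) ] as τ → 0⁺. -/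
open Real Filter Topology Asymptotics
open MeasureTheory

lemma integrable_exp_mul_gauss (t : ℝ) :
    Integrable fun g : ℝ => rexp (t * g) * rexp (-g ^ 2 / 2) := by
  have h : (fun g : ℝ => rexp (t * g) * rexp (-g ^ 2 / 2))
      = fun g : ℝ => rexp (t ^ 2 / 2) * rexp (-(1/2 : ℝ) * (g - t) ^ 2) := by
    funext g
    rw [← Real.exp_add, ← Real.exp_add]
    ring_nf
  rw [h]
  exact ((integrable_exp_neg_mul_sq (by norm_num : (0:ℝ) < 1/2)).comp_sub_right t).const_mul _

lemma integrable_exp_abs_gauss (t : ℝ) :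
    Integrable fun g : ℝ => rexp (t * |g|) * rexp (-g ^ 2 / 2) := by
  refine (((integrable_exp_mul_gauss t).add (integrable_exp_mul_gauss (-t))).mono'
    (Continuous.aestronglyMeasurable (by continuity)) (ae_of_all _ fun g => ?_))
  have h1 : rexp (t * |g|) ≤ rexp (t * g) + rexp (-t * g) := by
    rcases abs_cases g with ⟨h, _⟩ | ⟨h, _⟩
    · rw [h]; nlinarith [Real.exp_pos (-t * g)]
    · rw [h, show t * -g = -t * g by ring]; nlinarith [Real.exp_pos (t * g)]
  have h2 : (0:ℝ) < rexp (-g ^ 2 / 2) := Real.exp_pos _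
  rw [Real.norm_eq_abs, abs_of_nonneg (by positivity)]
  simp only [Pi.add_apply]
  nlinarith [Real.exp_pos (t * |g|)]

lemma integrable_of_le_exp_abs_gauss {f : ℝ → ℝ} (hf : Continuous f) (K t : ℝ)
    (h : ∀ g, |f g| ≤ K * (rexp (t * |g|) * rexp (-g ^ 2 / 2))) : Integrable f :=
  ((integrable_exp_abs_gauss t).const_mul K).mono' hf.aestronglyMeasurable (ae_of_all _ h)

lemma integrable_gauss0 : Integrable fun g : ℝ => rexp (-g ^ 2 / 2) := by
  have := integrable_exp_abs_gauss 0
  simpa using this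

lemma abs_le_exp_abs (g : ℝ) : |g| ≤ rexp |g| := (Real.add_one_le_exp |g|).trans' (by linarith)

lemma integrable_gauss1 : Integrable fun g : ℝ => g * rexp (-g ^ 2 / 2) := by
  refine integrable_of_le_exp_abs_gauss (by continuity) 1 1 fun g => ?_
  rw [abs_mul, abs_of_nonneg (Real.exp_pos _).le, one_mul, one_mul]
  nlinarith [Real.exp_pos (-g ^ 2 / 2), abs_nonneg g, abs_le_exp_abs g]

lemma integrable_gauss2 : Integrable fun g : ℝ => g ^ 2 * rexp (-g ^ 2 / 2) := by
  refine integrable_of_le_exp_abs_gauss (by continuity) 1 2 fun g => ?_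
  rw [abs_mul, abs_of_nonneg (Real.exp_pos _).le, one_mul, abs_pow]
  have h3 : |g| ^ 2 ≤ rexp |g| ^ 2 :=
    pow_le_pow_left₀ (abs_nonneg g) (abs_le_exp_abs g) 2
  have h4 : rexp |g| ^ 2 = rexp (2 * |g|) := by
    rw [← Real.exp_nat_mul]; norm_num
  nlinarith [Real.exp_pos (-g ^ 2 / 2)]

lemma gauss_m0 : ∫ g : ℝ, rexp (-g ^ 2 / 2) = Real.sqrt (2 * π) := by
  have h := integral_gaussian (1/2 : ℝ)
  rw [show π / (1/2 : ℝ) = 2 * π by ring] at h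
  rw [← h]
  congr 1; funext g; ring_nf

lemma tendsto_exp_neg_sq_atTop : Tendsto (fun g : ℝ => rexp (-g ^ 2 / 2)) atTop (𝓝 0) := by
  have h : Tendsto (fun g : ℝ => g ^ 2 / 2) atTop atTop :=
    (tendsto_pow_atTop two_ne_zero).atTop_div_const (by norm_num)
  have := Real.tendsto_exp_atBot.comp (tendsto_neg_atTop_atBot.comp h)
  refine this.congr fun g => ?_
  simp [Function.comp]; ring_nf

lemma hasDerivAt_negexp (g : ℝ) :
    HasDerivAt (fun g : ℝ => -rexp (-g ^ 2 / 2)) (g * rexp (-g ^ 2 / 2)) g := by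
  have h1 : HasDerivAt (fun g : ℝ => -g ^ 2 / 2) (-g) g := by
    have := ((hasDerivAt_pow 2 g).neg).div_const 2
    refine this.congr_deriv ?_; push_cast; ring
  have := (h1.exp).neg
  refine this.congr_deriv ?_; ring

lemma gauss_m1 : ∫ g : ℝ, g * rexp (-g ^ 2 / 2) = 0 := by
  have hint : Integrable fun g : ℝ => g * rexp (-g ^ 2 / 2) := integrable_gauss1
  have htop : Tendsto (fun g : ℝ => -rexp (-g ^ 2 / 2)) atTop (𝓝 0) := by
    simpa using tendsto_exp_neg_sq_atTop.neg
  have hbot : Tendsto (fun g : ℝ => -rexp (-g ^ 2 / 2)) atBot (𝓝 0) := by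
    have := htop.comp tendsto_neg_atBot_atTop
    refine this.congr fun g => ?_
    simp [Function.comp]
  have hIoi : ∫ g in Set.Ioi (0:ℝ), g * rexp (-g ^ 2 / 2) = 1 := by
    have := integral_Ioi_of_hasDerivAt_of_tendsto
      (f := fun g : ℝ => -rexp (-g ^ 2 / 2)) (a := 0)
      ((hasDerivAt_negexp 0).continuousAt.continuousWithinAt)
      (fun g _ => hasDerivAt_negexp g) hint.integrableOn htop
    simpa using this
  have hIic : ∫ g in Set.Iic (0:ℝ), g * rexp (-g ^ 2 / 2) = -1 := by
    have := integral_Iic_of_hasDerivAt_of_tendsto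
      (f := fun g : ℝ => -rexp (-g ^ 2 / 2)) (a := 0)
      ((hasDerivAt_negexp 0).continuousAt.continuousWithinAt)
      (fun g _ => hasDerivAt_negexp g) hint.integrableOn hbot
    simpa using this
  rw [← intervalIntegral.integral_Iic_add_Ioi (b := (0:ℝ)) hint.integrableOn hint.integrableOn, hIic, hIoi]
  ring

lemma tendsto_mul_exp_neg_sq_atTop :
    Tendsto (fun g : ℝ => g * rexp (-g ^ 2 / 2)) atTop (𝓝 0) := by
  have hexp : Tendsto (fun g : ℝ => g * rexp (-g)) atTop (𝓝 0) := by
    simpa using Real.tendsto_pow_mul_exp_neg_atTop_nhds_zero 1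
  refine squeeze_zero' (Filter.eventually_atTop.mpr ⟨0, fun g hg => by positivity⟩)
    (Filter.eventually_atTop.mpr ⟨2, fun g hg => ?_⟩) hexp
  have h1 : -g ^ 2 / 2 ≤ -g := by nlinarith
  have := Real.exp_le_exp.mpr h1
  nlinarith [Real.exp_pos (-g ^ 2 / 2)]

lemma hasDerivAt_F2 (g : ℝ) :
    HasDerivAt (fun g : ℝ => -(g * rexp (-g ^ 2 / 2)))
      ((g ^ 2 - 1) * rexp (-g ^ 2 / 2)) g := by
  have h1 : HasDerivAt (fun g : ℝ => -g ^ 2 / 2) (-g) g := by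
    have := ((hasDerivAt_pow 2 g).neg).div_const 2
    refine this.congr_deriv ?_; push_cast; ring
  have := ((hasDerivAt_id g).mul h1.exp).neg
  refine this.congr_deriv ?_; simp only [id]; ring

lemma gauss_m2 : ∫ g : ℝ, g ^ 2 * rexp (-g ^ 2 / 2) = Real.sqrt (2 * π) := by
  have hint : Integrable fun g : ℝ => (g ^ 2 - 1) * rexp (-g ^ 2 / 2) := by
    have := integrable_gauss2.sub integrable_gauss0
    refine this.congr ?_
    filter_upwards with g
    simp only [Pi.sub_apply]; ring
  have htop : Tendsto (fun g : ℝ => -(g * rexp (-g ^ 2 / 2))) atTop (𝓝 0) := by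
    simpa using tendsto_mul_exp_neg_sq_atTop.neg
  have hbot : Tendsto (fun g : ℝ => -(g * rexp (-g ^ 2 / 2))) atBot (𝓝 0) := by
    have := tendsto_mul_exp_neg_sq_atTop.comp tendsto_neg_atBot_atTop
    refine this.congr fun g => ?_
    simp only [Function.comp]
    ring_nf
  have hIoi : ∫ g in Set.Ioi (0:ℝ), (g ^ 2 - 1) * rexp (-g ^ 2 / 2) = 0 := by
    have := integral_Ioi_of_hasDerivAt_of_tendsto
      (f := fun g : ℝ => -(g * rexp (-g ^ 2 / 2))) (a := 0)
      ((hasDerivAt_F2 0).continuousAt.continuousWithinAt)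
      (fun g _ => hasDerivAt_F2 g) hint.integrableOn htop
    simpa using this
  have hIic : ∫ g in Set.Iic (0:ℝ), (g ^ 2 - 1) * rexp (-g ^ 2 / 2) = 0 := by
    have := integral_Iic_of_hasDerivAt_of_tendsto
      (f := fun g : ℝ => -(g * rexp (-g ^ 2 / 2))) (a := 0)
      ((hasDerivAt_F2 0).continuousAt.continuousWithinAt)
      (fun g _ => hasDerivAt_F2 g) hint.integrableOn hbot
    simpa using this
  have hzero : ∫ g : ℝ, (g ^ 2 - 1) * rexp (-g ^ 2 / 2) = 0 := by
    rw [← intervalIntegral.integral_Iic_add_Ioi (b := (0:ℝ)) hint.integrableOn hint.integrableOn,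
      hIic, hIoi]; ring
  have hsub : ∫ g : ℝ, (g ^ 2 - 1) * rexp (-g ^ 2 / 2)
      = (∫ g : ℝ, g ^ 2 * rexp (-g ^ 2 / 2)) - ∫ g : ℝ, rexp (-g ^ 2 / 2) := by
    rw [← integral_sub integrable_gauss2 integrable_gauss0]
    congr 1; funext g; ring
  rw [hsub, gauss_m0] at hzero
  linarith

lemma bound_aux {f f' : ℝ → ℝ} {C : ℝ} {k : ℕ} {h : ℝ}
    (hd : ∀ t, HasDerivAt f (f' t) t) (hc : Continuous f')
    (hb : ∀ t, |t| ≤ |h| → |f' t| ≤ C * |t| ^ k) (hf0 : f 0 = 0) :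
    |f h| ≤ C * |h| ^ (k + 1) / (k + 1) := by
  have key : f h = ∫ t in (0:ℝ)..h, f' t := by
    rw [intervalIntegral.integral_eq_sub_of_hasDerivAt (fun t _ => hd t)
      (hc.intervalIntegrable 0 h), hf0, sub_zero]
  rcases le_or_gt 0 h with hh | hh
  · have habs : |h| = h := abs_of_nonneg hh
    have step1 : |f h| ≤ ∫ t in (0:ℝ)..h, |f' t| := by
      rw [key, ← Real.norm_eq_abs]
      refine (intervalIntegral.norm_integral_le_integral_norm hh).trans ?_
      simp [Real.norm_eq_abs]
    have step2 : (∫ t in (0:ℝ)..h, |f' t|) ≤ ∫ t in (0:ℝ)..h, C * t ^ k := by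
      refine intervalIntegral.integral_mono_on hh
        (hc.abs.intervalIntegrable 0 h) (by apply Continuous.intervalIntegrable; continuity)
        fun t ht => ?_
      have h1 : |t| ≤ |h| := by
        rw [habs, abs_of_nonneg ht.1]; exact ht.2
      calc |f' t| ≤ C * |t| ^ k := hb t h1
        _ = C * t ^ k := by rw [abs_of_nonneg ht.1]
    have step3 : (∫ t in (0:ℝ)..h, C * t ^ k) = C * (h ^ (k+1) / (k+1)) := by
      rw [intervalIntegral.integral_const_mul, integral_pow]
      norm_num
    rw [habs]
    calc |f h| ≤ C * (h ^ (k+1) / (k+1)) := by rw [← step3]; exact step1.trans step2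
      _ = C * h ^ (k+1) / (k+1) := by ring
  · have habs : |h| = -h := abs_of_neg hh
    have step1 : |f h| ≤ ∫ t in h..(0:ℝ), |f' t| := by
      rw [key, ← Real.norm_eq_abs]
      have hsymm : (∫ t in (0:ℝ)..h, f' t) = -∫ t in h..(0:ℝ), f' t :=
        intervalIntegral.integral_symm h 0
      rw [hsymm, norm_neg]
      refine (intervalIntegral.norm_integral_le_integral_norm hh.le).trans ?_
      simp [Real.norm_eq_abs]
    have step2 : (∫ t in h..(0:ℝ), |f' t|) ≤ ∫ t in h..(0:ℝ), C * (-t) ^ k := by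
      refine intervalIntegral.integral_mono_on hh.le
        (hc.abs.intervalIntegrable h 0) (by apply Continuous.intervalIntegrable; continuity)
        fun t ht => ?_
      have h1 : |t| ≤ |h| := by
        rw [habs, abs_of_nonpos ht.2]; linarith [ht.1]
      calc |f' t| ≤ C * |t| ^ k := hb t h1
        _ = C * (-t) ^ k := by rw [abs_of_nonpos ht.2]
    have step3 : (∫ t in h..(0:ℝ), C * (-t) ^ k) = C * ((-h) ^ (k+1) / (k+1)) := by
      rw [intervalIntegral.integral_const_mul]
      have hcomp : (∫ t in h..(0:ℝ), (-t) ^ k) = ∫ t in (0:ℝ)..(-h), t ^ k := by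
        have := intervalIntegral.integral_comp_neg (a := h) (b := (0:ℝ))
          (fun t : ℝ => t ^ k)
        simpa using this
      rw [hcomp, integral_pow]
      norm_num
    rw [habs]
    calc |f h| ≤ C * ((-h) ^ (k+1) / (k+1)) := by rw [← step3]; exact step1.trans step2
      _ = C * (-h) ^ (k+1) / (k+1) := by ring

lemma taylor2 {f f1 f2 f3 : ℝ → ℝ} {B h : ℝ}
    (hd1 : ∀ t, HasDerivAt f (f1 t) t) (hd2 : ∀ t, HasDerivAt f1 (f2 t) t)
    (hd3 : ∀ t, HasDerivAt f2 (f3 t) t) (hc3 : Continuous f3)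
    (hB : ∀ t, |t| ≤ |h| → |f3 t| ≤ B) :
    |f h - f 0 - f1 0 * h - f2 0 * (h ^ 2 / 2)| ≤ B * |h| ^ 3 / 6 := by
  have hc2 : Continuous f2 := by
    have : Differentiable ℝ f2 := fun t => (hd3 t).differentiableAt
    exact this.continuous
  have hc1 : Continuous f1 := by
    have : Differentiable ℝ f1 := fun t => (hd2 t).differentiableAt
    exact this.continuous
  -- step 2 : |f2 t - f2 0| ≤ B * |t|
  have h2 : ∀ t, |t| ≤ |h| → |f2 t - f2 0| ≤ B * |t| ^ 1 := by
    intro t ht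
    have := bound_aux (f := fun s => f2 s - f2 0) (f' := f3) (C := B) (k := 0) (h := t)
      (fun s => (hd3 s).sub_const _) hc3
      (fun s hs => by simpa using hB s (hs.trans ht)) (by simp)
    simpa using this
  -- step 1 : |f1 t - f1 0 - f2 0 * t| ≤ (B/2) * |t|^2
  have h1 : ∀ t, |t| ≤ |h| → |f1 t - f1 0 - f2 0 * t| ≤ B / 2 * |t| ^ 2 := by
    intro t ht
    have hder : ∀ s, HasDerivAt (fun s => f1 s - f1 0 - f2 0 * s) (f2 s - f2 0) s := by
      intro s
      have hlin : HasDerivAt (fun s : ℝ => f2 0 * s) (f2 0) s := by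
        simpa using (hasDerivAt_id s).const_mul (f2 0)
      exact ((hd2 s).sub_const _).sub hlin
    have := bound_aux (f := fun s => f1 s - f1 0 - f2 0 * s)
      (f' := fun s => f2 s - f2 0) (C := B) (k := 1) (h := t)
      hder (by continuity)
      (fun s hs => by simpa using h2 s (hs.trans ht)) (by simp)
    norm_num at this
    calc |f1 t - f1 0 - f2 0 * t| ≤ B * t ^ 2 / 2 := this
      _ = B / 2 * |t| ^ 2 := by rw [sq_abs]; ring
  -- step 0
  have hder : ∀ s, HasDerivAt (fun s => f s - f 0 - f1 0 * s - f2 0 * (s ^ 2 / 2))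
      (f1 s - f1 0 - f2 0 * s) s := by
    intro s
    have hlin : HasDerivAt (fun s : ℝ => f1 0 * s) (f1 0) s := by
      simpa using (hasDerivAt_id s).const_mul (f1 0)
    have hsq : HasDerivAt (fun s : ℝ => f2 0 * (s ^ 2 / 2)) (f2 0 * s) s := by
      have := ((hasDerivAt_pow 2 s).div_const 2).const_mul (f2 0)
      refine this.congr_deriv ?_
      push_cast; ring
    exact (((hd1 s).sub_const _).sub hlin).sub hsq
  have := bound_aux (f := fun s => f s - f 0 - f1 0 * s - f2 0 * (s ^ 2 / 2))
    (f' := fun s => f1 s - f1 0 - f2 0 * s) (C := B / 2) (k := 2) (h := h)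
    hder (by continuity)
    (fun s hs => h1 s hs) (by simp)
  norm_num at this
  calc |f h - f 0 - f1 0 * h - f2 0 * (h ^ 2 / 2)| ≤ B / 2 * |h| ^ 3 / 3 := this
    _ = B * |h| ^ 3 / 6 := by ring

lemma sqrt_two_pi_pos : (0:ℝ) < Real.sqrt (2 * π) :=
  Real.sqrt_pos.mpr (by positivity)

lemma integrable_quadratic_gauss (α β γ : ℝ) :
    Integrable fun g : ℝ =>
      (α + β * g + γ * g ^ 2) * ((Real.sqrt (2 * π))⁻¹ * rexp (-g ^ 2 / 2)) := by
  have h : (fun g : ℝ => (α + β * g + γ * g ^ 2) * ((Real.sqrt (2 * π))⁻¹ * rexp (-g ^ 2 / 2)))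
      = fun g : ℝ => (Real.sqrt (2 * π))⁻¹ *
        (α * rexp (-g ^ 2 / 2) + (β * (g * rexp (-g ^ 2 / 2)) + γ * (g ^ 2 * rexp (-g ^ 2 / 2)))) := by
    funext g; ring
  rw [h]
  exact (((integrable_gauss0.const_mul α).add
    ((integrable_gauss1.const_mul β).add (integrable_gauss2.const_mul γ))).const_mul _)

lemma integral_quadratic_gauss (α β γ : ℝ) :
    ∫ g : ℝ, (α + β * g + γ * g ^ 2) * ((Real.sqrt (2 * π))⁻¹ * rexp (-g ^ 2 / 2)) = α + γ := by
  have h : (fun g : ℝ => (α + β * g + γ * g ^ 2) * ((Real.sqrt (2 * π))⁻¹ * rexp (-g ^ 2 / 2)))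
      = fun g : ℝ => (Real.sqrt (2 * π))⁻¹ *
        (α * rexp (-g ^ 2 / 2) + (β * (g * rexp (-g ^ 2 / 2)) + γ * (g ^ 2 * rexp (-g ^ 2 / 2)))) := by
    funext g; ring
  rw [h, integral_const_mul _ _,
    integral_add (f := fun g : ℝ => α * rexp (-g ^ 2 / 2))
      (g := fun g : ℝ => β * (g * rexp (-g ^ 2 / 2)) + γ * (g ^ 2 * rexp (-g ^ 2 / 2)))
      (integrable_gauss0.const_mul α)
      ((integrable_gauss1.const_mul β).add (integrable_gauss2.const_mul γ)),
    integral_add (f := fun g : ℝ => β * (g * rexp (-g ^ 2 / 2)))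
      (g := fun g : ℝ => γ * (g ^ 2 * rexp (-g ^ 2 / 2)))
      (integrable_gauss1.const_mul β) (integrable_gauss2.const_mul γ),
    integral_const_mul _ _, integral_const_mul _ _, integral_const_mul _ _,
    gauss_m0, gauss_m1, gauss_m2]
  field_simp
  ring

section PsiTaylor

variable {φ φ1 φ2 φ3 : ℝ → ℝ} {C1 C2 C3 : ℝ}

lemma hshift_deriv {F F' : ℝ → ℝ} (hF : ∀ t, HasDerivAt F (F' t) t) (x t : ℝ) :
    HasDerivAt (fun s => F (x + s)) (F' (x + t)) t := by
  have := (hF (x + t)).comp t ((hasDerivAt_id t).const_add x)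
  exact this.congr_deriv (mul_one _)

lemma lip_bound (hd1 : ∀ t, HasDerivAt φ (φ1 t) t) (hc1 : Continuous φ1)
    (hC1 : ∀ z, |φ1 z| ≤ C1) (x t : ℝ) : |φ (x + t) - φ x| ≤ C1 * |t| := by
  have := bound_aux (f := fun s => φ (x + s) - φ x) (f' := fun s => φ1 (x + s))
    (C := C1) (k := 0) (h := t)
    (fun s => (hshift_deriv hd1 x s).sub_const _)
    (hc1.comp (continuous_const.add continuous_id))
    (fun s _ => by simpa using hC1 (x + s)) (by simp)
  simpa using this

lemma exp_phi_bound (hd1 : ∀ t, HasDerivAt φ (φ1 t) t) (hc1 : Continuous φ1)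
    (hC1 : ∀ z, |φ1 z| ≤ C1) (x t : ℝ) :
    rexp (-φ (x + t)) ≤ rexp (-φ x) * rexp (C1 * |t|) := by
  rw [← Real.exp_add]
  apply Real.exp_le_exp.mpr
  have := lip_bound hd1 hc1 hC1 x t
  rw [abs_le] at this
  linarith [this.1]

lemma psi_taylor (hd1 : ∀ t, HasDerivAt φ (φ1 t) t) (hd2 : ∀ t, HasDerivAt φ1 (φ2 t) t)
    (hd3 : ∀ t, HasDerivAt φ2 (φ3 t) t) (hc3 : Continuous φ3)
    (hC1 : ∀ z, |φ1 z| ≤ C1) (hC2 : ∀ z, |φ2 z| ≤ C2) (hC3 : ∀ z, |φ3 z| ≤ C3)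
    (x h : ℝ) :
    |rexp (-φ (x + h)) - rexp (-φ x) - (-φ1 x * rexp (-φ x)) * h
      - ((φ1 x ^ 2 - φ2 x) * rexp (-φ x)) * (h ^ 2 / 2)|
    ≤ (C3 + 3 * C1 * C2 + C1 ^ 3) * (rexp (-φ x) * rexp (C1 * |h|)) * |h| ^ 3 / 6 := by
  have hc2 : Continuous φ2 := Differentiable.continuous fun t => (hd3 t).differentiableAt
  have hc1 : Continuous φ1 := Differentiable.continuous fun t => (hd2 t).differentiableAt
  have hcφ : Continuous φ := Differentiable.continuous fun t => (hd1 t).differentiableAt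
  have hC1nn : 0 ≤ C1 := (abs_nonneg _).trans (hC1 0)
  have hC2nn : 0 ≤ C2 := (abs_nonneg _).trans (hC2 0)
  have hC3nn : 0 ≤ C3 := (abs_nonneg _).trans (hC3 0)
  -- derivative chain for ψ
  have hdψ : ∀ t, HasDerivAt (fun s => rexp (-φ (x + s))) (-φ1 (x + t) * rexp (-φ (x + t))) t := by
    intro t
    have := ((hshift_deriv hd1 x t).neg).exp
    refine this.congr_deriv ?_; simp only [Pi.neg_apply]; ring
  have hdψ1 : ∀ t, HasDerivAt (fun s => -φ1 (x + s) * rexp (-φ (x + s)))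
      ((φ1 (x + t) ^ 2 - φ2 (x + t)) * rexp (-φ (x + t))) t := by
    intro t
    have := ((hshift_deriv hd2 x t).neg).mul (hdψ t)
    refine this.congr_deriv ?_; simp only [Pi.neg_apply]; ring
  have hdψ2 : ∀ t, HasDerivAt (fun s => (φ1 (x + s) ^ 2 - φ2 (x + s)) * rexp (-φ (x + s)))
      ((-φ3 (x + t) + 3 * φ1 (x + t) * φ2 (x + t) - φ1 (x + t) ^ 3) * rexp (-φ (x + t))) t := by
    intro t
    have hfst : HasDerivAt (fun s => φ1 (x + s) ^ 2 - φ2 (x + s))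
        (2 * φ1 (x + t) * φ2 (x + t) - φ3 (x + t)) t := by
      have := ((hshift_deriv hd2 x t).pow 2).sub (hshift_deriv hd3 x t)
      refine this.congr_deriv ?_; push_cast; ring
    have := hfst.mul (hdψ t)
    refine this.congr_deriv ?_; ring
  -- bound on third derivative
  have hB : ∀ t, |t| ≤ |h| →
      |(-φ3 (x + t) + 3 * φ1 (x + t) * φ2 (x + t) - φ1 (x + t) ^ 3) * rexp (-φ (x + t))|
        ≤ (C3 + 3 * C1 * C2 + C1 ^ 3) * (rexp (-φ x) * rexp (C1 * |h|)) := by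
    intro t ht
    rw [abs_mul, abs_of_nonneg (Real.exp_pos _).le]
    have h1 : |(-φ3 (x + t) + 3 * φ1 (x + t) * φ2 (x + t) - φ1 (x + t) ^ 3)|
        ≤ C3 + 3 * C1 * C2 + C1 ^ 3 := by
      have e3 := hC3 (x + t); have e1 := hC1 (x + t); have e2 := hC2 (x + t)
      have a1 := abs_nonneg (φ1 (x + t)); have a2 := abs_nonneg (φ2 (x + t))
      calc |(-φ3 (x + t) + 3 * φ1 (x + t) * φ2 (x + t) - φ1 (x + t) ^ 3)|
          ≤ |(-φ3 (x + t) + 3 * φ1 (x + t) * φ2 (x + t))| + |φ1 (x + t) ^ 3| := abs_sub _ _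
        _ ≤ |(-φ3 (x + t))| + |3 * φ1 (x + t) * φ2 (x + t)| + |φ1 (x + t) ^ 3| := by
            linarith [abs_add_le (-φ3 (x + t)) (3 * φ1 (x + t) * φ2 (x + t))]
        _ = |φ3 (x + t)| + 3 * (|φ1 (x + t)| * |φ2 (x + t)|) + |φ1 (x + t)| ^ 3 := by
            rw [abs_neg, abs_mul, abs_mul, abs_pow]
            norm_num [mul_assoc]
        _ ≤ C3 + 3 * (C1 * C2) + C1 ^ 3 := by
            gcongr
        _ = C3 + 3 * C1 * C2 + C1 ^ 3 := by ring
    have h2 : rexp (-φ (x + t)) ≤ rexp (-φ x) * rexp (C1 * |h|) := by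
      refine (exp_phi_bound hd1 hc1 hC1 x t).trans ?_
      have : C1 * |t| ≤ C1 * |h| := mul_le_mul_of_nonneg_left ht hC1nn
      exact mul_le_mul_of_nonneg_left (Real.exp_le_exp.mpr this) (Real.exp_pos _).le
    exact mul_le_mul h1 h2 (Real.exp_pos _).le (by positivity)
  have hcont : Continuous fun t =>
      (-φ3 (x + t) + 3 * φ1 (x + t) * φ2 (x + t) - φ1 (x + t) ^ 3) * rexp (-φ (x + t)) := by
    have hsh : Continuous fun t : ℝ => x + t := continuous_const.add continuous_id
    exact (((hc3.comp hsh).neg.add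
      ((continuous_const.mul (hc1.comp hsh)).mul (hc2.comp hsh))).sub
      ((hc1.comp hsh).pow 3)).mul ((hcφ.comp hsh).neg.rexp)
  have := taylor2 hdψ hdψ1 hdψ2 hcont hB
  simpa using this


lemma det_aux1 {t : ℝ} (h0 : 0 < t) (h1 : t < 1) : |(1 - t / 4) ^ 2 - 1| ≤ t := by
  rw [abs_le]; constructor <;> nlinarith


set_option maxHeartbeats 1000000 in
theorem stmt16 (lam p x : ℝ) (hlam : 0 < lam)
    (φ : ℝ → ℝ) (hφ : ContDiff ℝ 3 φ)
    (hbdd : ∀ i : ℕ, 1 ≤ i → i ≤ 3 → ∃ Ci : ℝ, ∀ z, |iteratedDeriv i φ z| ≤ Ci) :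
    (fun τ => (∫ g : ℝ, Real.exp
        (-φ (Real.sqrt (lam * τ) * (1 - τ / 4) * g + x * (1 + (1 / 2 - p) * τ)))
        * gpdf 0 1 g)
      - Real.exp (-φ x) * (1 + (lam * ((deriv φ x) ^ 2 - deriv (deriv φ) x)
          - deriv φ x * (1 - 2 * p) * x) * τ / 2))
      =O[𝓝[>] (0 : ℝ)] fun τ => τ * Real.sqrt τ := by
  -- regularity of φ
  obtain ⟨hdiff0, hdiff1, hdiff2, hcont3⟩ :
      Differentiable ℝ φ ∧ Differentiable ℝ (deriv φ) ∧ Differentiable ℝ (deriv (deriv φ))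
        ∧ Continuous (deriv (deriv (deriv φ))) := by
    rw [show (3 : WithTop ℕ∞) = 2 + 1 by norm_num, contDiff_succ_iff_deriv] at hφ
    obtain ⟨h1, -, hφ'⟩ := hφ
    rw [show (2 : WithTop ℕ∞) = 1 + 1 by norm_num, contDiff_succ_iff_deriv] at hφ'
    obtain ⟨h2, -, hφ''⟩ := hφ'
    rw [contDiff_one_iff_deriv] at hφ''
    exact ⟨h1, h2, hφ''.1, hφ''.2⟩
  have hd1 : ∀ t, HasDerivAt φ (deriv φ t) t := fun t => (hdiff0 t).hasDerivAt
  have hd2 : ∀ t, HasDerivAt (deriv φ) (deriv (deriv φ) t) t := fun t => (hdiff1 t).hasDerivAt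
  have hd3 : ∀ t, HasDerivAt (deriv (deriv φ)) (deriv (deriv (deriv φ)) t) t :=
    fun t => (hdiff2 t).hasDerivAt
  have hc1 : Continuous (deriv φ) := hdiff1.continuous
  -- bounds on derivatives
  obtain ⟨C1, hC1i⟩ := hbdd 1 le_rfl (by norm_num)
  obtain ⟨C2, hC2i⟩ := hbdd 2 (by norm_num) (by norm_num)
  obtain ⟨C3, hC3i⟩ := hbdd 3 (by norm_num) le_rfl
  have hC1 : ∀ z, |deriv φ z| ≤ C1 := by
    intro z; have := hC1i z; rwa [iteratedDeriv_one] at this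
  have hC2 : ∀ z, |deriv (deriv φ) z| ≤ C2 := by
    intro z; have := hC2i z
    rwa [show (2:ℕ) = 1 + 1 from rfl, iteratedDeriv_succ, iteratedDeriv_one] at this
  have hC3 : ∀ z, |deriv (deriv (deriv φ)) z| ≤ C3 := by
    intro z; have := hC3i z
    rwa [show (3:ℕ) = 1 + 1 + 1 from rfl, iteratedDeriv_succ, iteratedDeriv_succ,
      iteratedDeriv_one] at this
  have hC1nn : 0 ≤ C1 := (abs_nonneg _).trans (hC1 0)
  have hC2nn : 0 ≤ C2 := (abs_nonneg _).trans (hC2 0)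
  have hC3nn : 0 ≤ C3 := (abs_nonneg _).trans (hC3 0)
  have hψ0 : (0:ℝ) < rexp (-φ x) := Real.exp_pos _
  have hMnn : 0 ≤ C3 + 3 * C1 * C2 + C1 ^ 3 := by positivity
  -- constants
  set c0 : ℝ := |x * (1 / 2 - p)| with hc0
  have hc0nn : 0 ≤ c0 := abs_nonneg _
  set t0 : ℝ := (C1 + 3) * Real.sqrt lam with ht0
  set J : ℝ := ∫ g : ℝ, rexp (t0 * |g|) * rexp (-g ^ 2 / 2) with hJ
  have hJnn : 0 ≤ J := integral_nonneg fun g => by positivity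
  set Kd : ℝ := rexp (-φ x) * |deriv φ x ^ 2 - deriv (deriv φ) x|
    * (x ^ 2 * (1 / 2 - p) ^ 2 + lam) / 2 with hKd
  set Kr : ℝ := (C3 + 3 * C1 * C2 + C1 ^ 3) * rexp (-φ x) / 6
    * rexp ((C1 + 3) * c0) * (Real.sqrt (2 * π))⁻¹ * J with hKr
  -- integrability of the main integrand
  have hint : ∀ a c : ℝ, Integrable fun g : ℝ =>
      rexp (-φ (x + (a * g + c))) * ((Real.sqrt (2 * π))⁻¹ * rexp (-g ^ 2 / 2)) := by
    intro a c
    refine integrable_of_le_exp_abs_gauss ?_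
      (rexp (-φ x) * rexp (C1 * |c|) * (Real.sqrt (2 * π))⁻¹) (C1 * |a|) fun g => ?_
    · have hφc : Continuous φ := hdiff0.continuous
      continuity
    · rw [abs_of_nonneg (by positivity)]
      have h1 : rexp (-φ (x + (a * g + c))) ≤ rexp (-φ x) * rexp (C1 * |a * g + c|) :=
        exp_phi_bound hd1 hc1 hC1 x _
      have h2 : rexp (C1 * |a * g + c|) ≤ rexp (C1 * |a| * |g|) * rexp (C1 * |c|) := by
        rw [← Real.exp_add]
        apply Real.exp_le_exp.mpr
        have h3 : |a * g + c| ≤ |a| * |g| + |c| := (abs_add_le _ _).trans (by rw [abs_mul])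
        nlinarith
      calc rexp (-φ (x + (a * g + c))) * ((Real.sqrt (2 * π))⁻¹ * rexp (-g ^ 2 / 2))
          ≤ (rexp (-φ x) * (rexp (C1 * |a| * |g|) * rexp (C1 * |c|)))
            * ((Real.sqrt (2 * π))⁻¹ * rexp (-g ^ 2 / 2)) := by
            have := h1.trans (mul_le_mul_of_nonneg_left h2 hψ0.le)
            exact mul_le_mul_of_nonneg_right this (by positivity)
        _ = rexp (-φ x) * rexp (C1 * |c|) * (Real.sqrt (2 * π))⁻¹
            * (rexp (C1 * |a| * |g|) * rexp (-g ^ 2 / 2)) := by ring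
  -- value of the quadratic part
  have hQval : ∀ a c : ℝ,
      (∫ g : ℝ, (rexp (-φ x) + (-deriv φ x * rexp (-φ x)) * (a * g + c)
          + (deriv φ x ^ 2 - deriv (deriv φ) x) * rexp (-φ x) * ((a * g + c) ^ 2 / 2))
        * ((Real.sqrt (2 * π))⁻¹ * rexp (-g ^ 2 / 2)))
      = rexp (-φ x) + (-deriv φ x * rexp (-φ x)) * c
        + (deriv φ x ^ 2 - deriv (deriv φ) x) * rexp (-φ x) * ((c ^ 2 + a ^ 2) / 2) := by
    intro a c
    have hfe : (fun g : ℝ => (rexp (-φ x) + (-deriv φ x * rexp (-φ x)) * (a * g + c)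
          + (deriv φ x ^ 2 - deriv (deriv φ) x) * rexp (-φ x) * ((a * g + c) ^ 2 / 2))
        * ((Real.sqrt (2 * π))⁻¹ * rexp (-g ^ 2 / 2)))
        = fun g : ℝ => ((rexp (-φ x) + (-deriv φ x * rexp (-φ x)) * c
            + (deriv φ x ^ 2 - deriv (deriv φ) x) * rexp (-φ x) * (c ^ 2 / 2))
          + ((-deriv φ x * rexp (-φ x)) * a
            + (deriv φ x ^ 2 - deriv (deriv φ) x) * rexp (-φ x) * (a * c)) * g
          + ((deriv φ x ^ 2 - deriv (deriv φ) x) * rexp (-φ x) * (a ^ 2 / 2)) * g ^ 2)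
          * ((Real.sqrt (2 * π))⁻¹ * rexp (-g ^ 2 / 2)) := by
      funext g; ring
    rw [hfe, integral_quadratic_gauss]
    ring
  have hQint : ∀ a c : ℝ, Integrable fun g : ℝ =>
      (rexp (-φ x) + (-deriv φ x * rexp (-φ x)) * (a * g + c)
          + (deriv φ x ^ 2 - deriv (deriv φ) x) * rexp (-φ x) * ((a * g + c) ^ 2 / 2))
        * ((Real.sqrt (2 * π))⁻¹ * rexp (-g ^ 2 / 2)) := by
    intro a c
    refine (integrable_quadratic_gauss
      (rexp (-φ x) + (-deriv φ x * rexp (-φ x)) * c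
            + (deriv φ x ^ 2 - deriv (deriv φ) x) * rexp (-φ x) * (c ^ 2 / 2))
      ((-deriv φ x * rexp (-φ x)) * a
            + (deriv φ x ^ 2 - deriv (deriv φ) x) * rexp (-φ x) * (a * c))
      ((deriv φ x ^ 2 - deriv (deriv φ) x) * rexp (-φ x) * (a ^ 2 / 2))).congr
      (Filter.Eventually.of_forall fun g => by ring)
  -- main estimate
  rw [Asymptotics.isBigO_iff]
  refine ⟨Kd + Kr, ?_⟩
  filter_upwards [Ioo_mem_nhdsGT_of_mem (Set.left_mem_Ico.mpr zero_lt_one)] with τ hτ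
  obtain ⟨hτ0, hτ1⟩ := hτ
  have hsτ0 : 0 < Real.sqrt τ := Real.sqrt_pos.mpr hτ0
  have hsτsq : Real.sqrt τ ^ 2 = τ := Real.sq_sqrt hτ0.le
  have hsτ1 : Real.sqrt τ ≤ 1 := by nlinarith
  have hττ : τ ≤ Real.sqrt τ := by nlinarith
  have hττpos : 0 < τ * Real.sqrt τ := by positivity
  set a : ℝ := Real.sqrt (lam * τ) * (1 - τ / 4) with ha
  set c : ℝ := x * (1 / 2 - p) * τ with hc
  have ha2 : a ^ 2 = lam * τ * (1 - τ / 4) ^ 2 := by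
    rw [ha, mul_pow, Real.sq_sqrt (by positivity)]
  have haabs : |a| ≤ Real.sqrt lam * Real.sqrt τ := by
    rw [ha, abs_mul, abs_of_nonneg (Real.sqrt_nonneg (lam * τ)), ← Real.sqrt_mul hlam.le]
    have h2 : |1 - τ / 4| ≤ 1 := by rw [abs_le]; constructor <;> nlinarith
    calc Real.sqrt (lam * τ) * |1 - τ / 4| ≤ Real.sqrt (lam * τ) * 1 :=
        mul_le_mul_of_nonneg_left h2 (Real.sqrt_nonneg _)
      _ = Real.sqrt (lam * τ) := mul_one _
  have hcabs : |c| ≤ c0 * Real.sqrt τ := by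
    rw [hc, hc0, show x * (1 / 2 - p) * τ = x * (1 / 2 - p) * τ from rfl, abs_mul,
      abs_of_pos hτ0]
    exact mul_le_mul_of_nonneg_left hττ (abs_nonneg _)
  -- rewrite the integral
  have harg : ∀ g : ℝ, a * g + x * (1 + (1 / 2 - p) * τ) = x + (a * g + c) := by
    intro g; rw [hc]; ring
  have hgpdf : ∀ g : ℝ, gpdf 0 1 g = (Real.sqrt (2 * π))⁻¹ * rexp (-g ^ 2 / 2) := by
    intro g; simp [gpdf]
  have hIrw : (∫ g : ℝ, rexp (-φ (a * g + x * (1 + (1 / 2 - p) * τ))) * gpdf 0 1 g)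
      = ∫ g : ℝ, rexp (-φ (x + (a * g + c)))
          * ((Real.sqrt (2 * π))⁻¹ * rexp (-g ^ 2 / 2)) := by
    congr 1; funext g; rw [harg g, hgpdf g]
  -- split off the quadratic approximation
  set Rint : ℝ := ∫ g : ℝ,
      (rexp (-φ (x + (a * g + c))) * ((Real.sqrt (2 * π))⁻¹ * rexp (-g ^ 2 / 2))
        - (rexp (-φ x) + (-deriv φ x * rexp (-φ x)) * (a * g + c)
            + (deriv φ x ^ 2 - deriv (deriv φ) x) * rexp (-φ x) * ((a * g + c) ^ 2 / 2))
          * ((Real.sqrt (2 * π))⁻¹ * rexp (-g ^ 2 / 2))) with hRint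
  have hsplit : (∫ g : ℝ, rexp (-φ (x + (a * g + c)))
        * ((Real.sqrt (2 * π))⁻¹ * rexp (-g ^ 2 / 2)))
      = (rexp (-φ x) + (-deriv φ x * rexp (-φ x)) * c
          + (deriv φ x ^ 2 - deriv (deriv φ) x) * rexp (-φ x) * ((c ^ 2 + a ^ 2) / 2))
        + Rint := by
    rw [hRint, integral_sub (hint a c) (hQint a c), hQval a c]
    ring
  -- bound on the remainder integral
  have hRb : |Rint| ≤ Kr * (τ * Real.sqrt τ) := by
    have hM6 : (0:ℝ) ≤ (C3 + 3 * C1 * C2 + C1 ^ 3) * rexp (-φ x) / 6 :=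
      div_nonneg (mul_nonneg hMnn hψ0.le) (by norm_num)
    have hbnd : ∀ g : ℝ,
        ‖rexp (-φ (x + (a * g + c))) * ((Real.sqrt (2 * π))⁻¹ * rexp (-g ^ 2 / 2))
          - (rexp (-φ x) + (-deriv φ x * rexp (-φ x)) * (a * g + c)
            + (deriv φ x ^ 2 - deriv (deriv φ) x) * rexp (-φ x) * ((a * g + c) ^ 2 / 2))
            * ((Real.sqrt (2 * π))⁻¹ * rexp (-g ^ 2 / 2))‖
        ≤ ((C3 + 3 * C1 * C2 + C1 ^ 3) * rexp (-φ x) / 6 * rexp ((C1 + 3) * c0)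
            * (Real.sqrt (2 * π))⁻¹ * (τ * Real.sqrt τ))
          * (rexp (t0 * |g|) * rexp (-g ^ 2 / 2)) := by
      intro g
      rw [Real.norm_eq_abs,
        show rexp (-φ (x + (a * g + c))) * ((Real.sqrt (2 * π))⁻¹ * rexp (-g ^ 2 / 2))
          - (rexp (-φ x) + (-deriv φ x * rexp (-φ x)) * (a * g + c)
            + (deriv φ x ^ 2 - deriv (deriv φ) x) * rexp (-φ x) * ((a * g + c) ^ 2 / 2))
            * ((Real.sqrt (2 * π))⁻¹ * rexp (-g ^ 2 / 2))
          = (rexp (-φ (x + (a * g + c))) - rexp (-φ x)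
              - (-deriv φ x * rexp (-φ x)) * (a * g + c)
              - ((deriv φ x ^ 2 - deriv (deriv φ) x) * rexp (-φ x)) * ((a * g + c) ^ 2 / 2))
            * ((Real.sqrt (2 * π))⁻¹ * rexp (-g ^ 2 / 2)) from by ring,
        abs_mul, abs_of_nonneg (show (0:ℝ) ≤ (Real.sqrt (2 * π))⁻¹ * rexp (-g ^ 2 / 2)
          by positivity)]
      have htay := psi_taylor hd1 hd2 hd3 hcont3 hC1 hC2 hC3 x (a * g + c)
      set w : ℝ := Real.sqrt lam * |g| + c0 with hwdef
      have hwnn : 0 ≤ w := add_nonneg (by positivity) hc0nn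
      have hw : |a * g + c| ≤ Real.sqrt τ * w := by
        calc |a * g + c| ≤ |a| * |g| + |c| := (abs_add_le _ _).trans (by rw [abs_mul])
          _ ≤ Real.sqrt lam * Real.sqrt τ * |g| + c0 * Real.sqrt τ :=
            add_le_add (mul_le_mul_of_nonneg_right haabs (abs_nonneg g)) hcabs
          _ = Real.sqrt τ * w := by rw [hwdef]; ring
      have hw1 : |a * g + c| ≤ w := hw.trans (by nlinarith)
      have h3 : |a * g + c| ^ 3 ≤ τ * Real.sqrt τ * w ^ 3 := by
        calc |a * g + c| ^ 3 ≤ (Real.sqrt τ * w) ^ 3 :=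
            pow_le_pow_left₀ (abs_nonneg _) hw 3
          _ = Real.sqrt τ ^ 2 * Real.sqrt τ * w ^ 3 := by ring
          _ = τ * Real.sqrt τ * w ^ 3 := by rw [hsτsq]
      have hexpw : rexp (C1 * |a * g + c|) ≤ rexp (C1 * w) :=
        Real.exp_le_exp.mpr (mul_le_mul_of_nonneg_left hw1 hC1nn)
      have hw3 : w ^ 3 ≤ rexp (3 * w) := by
        have h4 : w ≤ rexp w := by linarith [Real.add_one_le_exp w]
        calc w ^ 3 ≤ rexp w ^ 3 := pow_le_pow_left₀ hwnn h4 3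
          _ = rexp (3 * w) := by
            rw [show (3:ℝ) * w = ((3:ℕ):ℝ) * w by norm_num, Real.exp_nat_mul]
      have hchain : (C3 + 3 * C1 * C2 + C1 ^ 3)
            * (rexp (-φ x) * rexp (C1 * |a * g + c|)) * |a * g + c| ^ 3 / 6
          ≤ (C3 + 3 * C1 * C2 + C1 ^ 3) * rexp (-φ x) / 6 * rexp ((C1 + 3) * c0)
            * (τ * Real.sqrt τ) * rexp (t0 * |g|) := by
        have s1 : rexp (C1 * |a * g + c|) * |a * g + c| ^ 3
            ≤ rexp (C1 * w) * (τ * Real.sqrt τ * w ^ 3) :=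
          mul_le_mul hexpw h3 (by positivity) (Real.exp_pos _).le
        have s2 : (C3 + 3 * C1 * C2 + C1 ^ 3)
              * (rexp (-φ x) * rexp (C1 * |a * g + c|)) * |a * g + c| ^ 3 / 6
            = (C3 + 3 * C1 * C2 + C1 ^ 3) * rexp (-φ x) / 6
              * (rexp (C1 * |a * g + c|) * |a * g + c| ^ 3) := by ring
        have s3 : (C3 + 3 * C1 * C2 + C1 ^ 3) * rexp (-φ x) / 6
              * (rexp (C1 * w) * (τ * Real.sqrt τ * w ^ 3))
            = (C3 + 3 * C1 * C2 + C1 ^ 3) * rexp (-φ x) / 6 * (τ * Real.sqrt τ)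
              * (w ^ 3 * rexp (C1 * w)) := by ring
        have s4 : (C3 + 3 * C1 * C2 + C1 ^ 3) * rexp (-φ x) / 6 * (τ * Real.sqrt τ)
              * (w ^ 3 * rexp (C1 * w))
            ≤ (C3 + 3 * C1 * C2 + C1 ^ 3) * rexp (-φ x) / 6 * (τ * Real.sqrt τ)
              * (rexp (3 * w) * rexp (C1 * w)) := by
          refine mul_le_mul_of_nonneg_left
            (mul_le_mul_of_nonneg_right hw3 (Real.exp_pos _).le) ?_
          positivity
        have s5 : rexp (3 * w) * rexp (C1 * w) = rexp ((C1 + 3) * c0) * rexp (t0 * |g|) := by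
          rw [← Real.exp_add, ← Real.exp_add]
          congr 1
          rw [hwdef, ht0]; ring
        calc (C3 + 3 * C1 * C2 + C1 ^ 3)
              * (rexp (-φ x) * rexp (C1 * |a * g + c|)) * |a * g + c| ^ 3 / 6
            = (C3 + 3 * C1 * C2 + C1 ^ 3) * rexp (-φ x) / 6
              * (rexp (C1 * |a * g + c|) * |a * g + c| ^ 3) := s2
          _ ≤ (C3 + 3 * C1 * C2 + C1 ^ 3) * rexp (-φ x) / 6
              * (rexp (C1 * w) * (τ * Real.sqrt τ * w ^ 3)) :=
            mul_le_mul_of_nonneg_left s1 hM6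
          _ = (C3 + 3 * C1 * C2 + C1 ^ 3) * rexp (-φ x) / 6 * (τ * Real.sqrt τ)
              * (w ^ 3 * rexp (C1 * w)) := s3
          _ ≤ (C3 + 3 * C1 * C2 + C1 ^ 3) * rexp (-φ x) / 6 * (τ * Real.sqrt τ)
              * (rexp (3 * w) * rexp (C1 * w)) := s4
          _ = (C3 + 3 * C1 * C2 + C1 ^ 3) * rexp (-φ x) / 6 * rexp ((C1 + 3) * c0)
              * (τ * Real.sqrt τ) * rexp (t0 * |g|) := by rw [s5]; ring
      calc |rexp (-φ (x + (a * g + c))) - rexp (-φ x)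
              - (-deriv φ x * rexp (-φ x)) * (a * g + c)
              - ((deriv φ x ^ 2 - deriv (deriv φ) x) * rexp (-φ x)) * ((a * g + c) ^ 2 / 2)|
            * ((Real.sqrt (2 * π))⁻¹ * rexp (-g ^ 2 / 2))
          ≤ ((C3 + 3 * C1 * C2 + C1 ^ 3) * rexp (-φ x) / 6 * rexp ((C1 + 3) * c0)
              * (τ * Real.sqrt τ) * rexp (t0 * |g|))
            * ((Real.sqrt (2 * π))⁻¹ * rexp (-g ^ 2 / 2)) :=
          mul_le_mul_of_nonneg_right (htay.trans hchain) (by positivity)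
        _ = ((C3 + 3 * C1 * C2 + C1 ^ 3) * rexp (-φ x) / 6 * rexp ((C1 + 3) * c0)
            * (Real.sqrt (2 * π))⁻¹ * (τ * Real.sqrt τ))
          * (rexp (t0 * |g|) * rexp (-g ^ 2 / 2)) := by ring
    have hbint : Integrable fun g : ℝ =>
        ((C3 + 3 * C1 * C2 + C1 ^ 3) * rexp (-φ x) / 6 * rexp ((C1 + 3) * c0)
            * (Real.sqrt (2 * π))⁻¹ * (τ * Real.sqrt τ))
          * (rexp (t0 * |g|) * rexp (-g ^ 2 / 2)) :=
      (integrable_exp_abs_gauss t0).const_mul _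
    have hle := norm_integral_le_of_norm_le hbint (Filter.Eventually.of_forall hbnd)
    rw [Real.norm_eq_abs] at hle
    calc |Rint| ≤ ∫ g : ℝ, ((C3 + 3 * C1 * C2 + C1 ^ 3) * rexp (-φ x) / 6
            * rexp ((C1 + 3) * c0) * (Real.sqrt (2 * π))⁻¹ * (τ * Real.sqrt τ))
          * (rexp (t0 * |g|) * rexp (-g ^ 2 / 2)) := by rw [hRint]; exact hle
      _ = ((C3 + 3 * C1 * C2 + C1 ^ 3) * rexp (-φ x) / 6 * rexp ((C1 + 3) * c0)
            * (Real.sqrt (2 * π))⁻¹ * (τ * Real.sqrt τ)) * J := by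
          rw [integral_const_mul _ _, hJ]
      _ = Kr * (τ * Real.sqrt τ) := by rw [hKr]; ring
  -- bound on the deterministic part
  have hDet : |(rexp (-φ x) + (-deriv φ x * rexp (-φ x)) * c
        + (deriv φ x ^ 2 - deriv (deriv φ) x) * rexp (-φ x) * ((c ^ 2 + a ^ 2) / 2))
      - rexp (-φ x) * (1 + (lam * (deriv φ x ^ 2 - deriv (deriv φ) x)
          - deriv φ x * (1 - 2 * p) * x) * τ / 2)| ≤ Kd * (τ * Real.sqrt τ) := by
    have hval : (rexp (-φ x) + (-deriv φ x * rexp (-φ x)) * c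
        + (deriv φ x ^ 2 - deriv (deriv φ) x) * rexp (-φ x) * ((c ^ 2 + a ^ 2) / 2))
      - rexp (-φ x) * (1 + (lam * (deriv φ x ^ 2 - deriv (deriv φ) x)
          - deriv φ x * (1 - 2 * p) * x) * τ / 2)
      = rexp (-φ x) * (deriv φ x ^ 2 - deriv (deriv φ) x)
        * (x ^ 2 * (1 / 2 - p) ^ 2 * τ ^ 2 + lam * τ * ((1 - τ / 4) ^ 2 - 1)) / 2 := by
      rw [ha2, hc]; ring
    rw [hval]
    have h1 : |x ^ 2 * (1 / 2 - p) ^ 2 * τ ^ 2 + lam * τ * ((1 - τ / 4) ^ 2 - 1)|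
        ≤ (x ^ 2 * (1 / 2 - p) ^ 2 + lam) * (τ * Real.sqrt τ) := by
      have e1 : |x ^ 2 * (1 / 2 - p) ^ 2 * τ ^ 2|
          ≤ x ^ 2 * (1 / 2 - p) ^ 2 * (τ * Real.sqrt τ) := by
        rw [abs_of_nonneg (by positivity)]
        have h5 : τ ^ 2 ≤ τ * Real.sqrt τ := by
          rw [pow_two]; exact mul_le_mul_of_nonneg_left hττ hτ0.le
        exact mul_le_mul_of_nonneg_left h5 (by positivity)
      have e2 : |lam * τ * ((1 - τ / 4) ^ 2 - 1)| ≤ lam * (τ * Real.sqrt τ) := by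
        rw [abs_mul, abs_of_nonneg (by positivity : (0:ℝ) ≤ lam * τ)]
        have h3 : |(1 - τ / 4) ^ 2 - 1| ≤ τ := det_aux1 hτ0 hτ1
        calc lam * τ * |(1 - τ / 4) ^ 2 - 1| ≤ lam * τ * τ :=
            mul_le_mul_of_nonneg_left h3 (by positivity)
          _ ≤ lam * (τ * Real.sqrt τ) := by
            rw [mul_assoc]
            exact mul_le_mul_of_nonneg_left
              (mul_le_mul_of_nonneg_left hττ hτ0.le) hlam.le
      calc |x ^ 2 * (1 / 2 - p) ^ 2 * τ ^ 2 + lam * τ * ((1 - τ / 4) ^ 2 - 1)|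
          ≤ |x ^ 2 * (1 / 2 - p) ^ 2 * τ ^ 2| + |lam * τ * ((1 - τ / 4) ^ 2 - 1)| := abs_add_le _ _
        _ ≤ x ^ 2 * (1 / 2 - p) ^ 2 * (τ * Real.sqrt τ) + lam * (τ * Real.sqrt τ) := by
            linarith
        _ = (x ^ 2 * (1 / 2 - p) ^ 2 + lam) * (τ * Real.sqrt τ) := by ring
    rw [abs_div, abs_mul, abs_mul, abs_of_pos hψ0, abs_two, hKd]
    calc rexp (-φ x) * |deriv φ x ^ 2 - deriv (deriv φ) x|
          * |x ^ 2 * (1 / 2 - p) ^ 2 * τ ^ 2 + lam * τ * ((1 - τ / 4) ^ 2 - 1)| / 2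
        ≤ rexp (-φ x) * |deriv φ x ^ 2 - deriv (deriv φ) x|
          * ((x ^ 2 * (1 / 2 - p) ^ 2 + lam) * (τ * Real.sqrt τ)) / 2 := by
          have := mul_le_mul_of_nonneg_left h1
            (by positivity : (0:ℝ) ≤ rexp (-φ x) * |deriv φ x ^ 2 - deriv (deriv φ) x|)
          linarith
      _ = rexp (-φ x) * |deriv φ x ^ 2 - deriv (deriv φ) x|
          * (x ^ 2 * (1 / 2 - p) ^ 2 + lam) / 2 * (τ * Real.sqrt τ) := by ring
  -- assemble
  rw [Real.norm_eq_abs, Real.norm_eq_abs, hIrw, hsplit, abs_of_pos hττpos]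
  calc |(rexp (-φ x) + (-deriv φ x * rexp (-φ x)) * c
          + (deriv φ x ^ 2 - deriv (deriv φ) x) * rexp (-φ x) * ((c ^ 2 + a ^ 2) / 2)) + Rint
        - rexp (-φ x) * (1 + (lam * (deriv φ x ^ 2 - deriv (deriv φ) x)
          - deriv φ x * (1 - 2 * p) * x) * τ / 2)|
      ≤ |(rexp (-φ x) + (-deriv φ x * rexp (-φ x)) * c
          + (deriv φ x ^ 2 - deriv (deriv φ) x) * rexp (-φ x) * ((c ^ 2 + a ^ 2) / 2))
        - rexp (-φ x) * (1 + (lam * (deriv φ x ^ 2 - deriv (deriv φ) x)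
          - deriv φ x * (1 - 2 * p) * x) * τ / 2)| + |Rint| := by
        rw [show (rexp (-φ x) + (-deriv φ x * rexp (-φ x)) * c
          + (deriv φ x ^ 2 - deriv (deriv φ) x) * rexp (-φ x) * ((c ^ 2 + a ^ 2) / 2)) + Rint
        - rexp (-φ x) * (1 + (lam * (deriv φ x ^ 2 - deriv (deriv φ) x)
          - deriv φ x * (1 - 2 * p) * x) * τ / 2)
          = ((rexp (-φ x) + (-deriv φ x * rexp (-φ x)) * c
          + (deriv φ x ^ 2 - deriv (deriv φ) x) * rexp (-φ x) * ((c ^ 2 + a ^ 2) / 2))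
        - rexp (-φ x) * (1 + (lam * (deriv φ x ^ 2 - deriv (deriv φ) x)
          - deriv φ x * (1 - 2 * p) * x) * τ / 2)) + Rint from by ring]
        exact abs_add_le _ _
    _ ≤ Kd * (τ * Real.sqrt τ) + Kr * (τ * Real.sqrt τ) := add_le_add hDet hRb
    _ = (Kd + Kr) * (τ * Real.sqrt τ) := by ring
end PsiTaylor
end
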